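/- arXiv:1611.09924 — 3 statements merged into one kernel-verified Lean document; each statement's English description precedes it below -/
import Mathlib

section
/- Let k be a field and A = k[u_1, u_2, v_1, v_2]. Set I_Δ = (u_1 − v_1, u_2 − v_2), I_T = (u_1 − v_2, u_2 − v_1), and I_S = I_Δ ∩ I_T. Then the map A/I_T → A/I_S sending the class of a to the class of (u_1 − v_1)·a is a well-defined injective A-module map, and the sequence 0 → A/I_T → A/I_S → A/I_Δ → 0, with second map the natural quotient, is exact. -/
open MvPolynomial

noncomputable section StatementFour

/-- `A = k[u₁, u₂, v₁, v₂]`, with `u₁ = X 0`, `u₂ = X 1`, `v₁ = X 2`, `v₂ = X 3`. -/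
abbrev A4 (k : Type) [Field k] : Type := MvPolynomial (Fin 4) k

/-- `I_Δ = (u₁ − v₁, u₂ − v₂)`, the ideal of the diagonal. -/
def Idiag (k : Type) [Field k] : Ideal (A4 k) := Ideal.span {X 0 - X 2, X 1 - X 3}

/-- `I_T = (u₁ − v₂, u₂ − v₁)`, the ideal of the transposition locus. -/
def Itrans (k : Type) [Field k] : Ideal (A4 k) := Ideal.span {X 0 - X 3, X 1 - X 2}

/-- `I_S = I_Δ ∩ I_T`. -/
def Iunion (k : Type) [Field k] : Ideal (A4 k) := Idiag k ⊓ Itrans k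

/-- The substitution `u₁ ↦ v₂, u₂ ↦ v₁` whose kernel is `I_T`. -/
def σmap (k : Type) [Field k] : A4 k →ₐ[k] A4 k := aeval ![X 3, X 2, X 2, X 3]

lemma σmap_of_mem (k : Type) [Field k] {f : A4 k} (hf : f ∈ Itrans k) : σmap k f = 0 := by
  have hle : Itrans k ≤ RingHom.ker (σmap k).toRingHom := by
    rw [Itrans, Ideal.span_le]
    rintro g (rfl | rfl) <;> simp [RingHom.mem_ker, σmap]
  exact hle hf

lemma mk_σmap (k : Type) [Field k] (f : A4 k) :
    Ideal.Quotient.mk (Itrans k) (σmap k f) = Ideal.Quotient.mk (Itrans k) f := by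
  have h : (Ideal.Quotient.mkₐ k (Itrans k)).comp (σmap k)
      = Ideal.Quotient.mkₐ k (Itrans k) := by
    apply MvPolynomial.algHom_ext
    intro i
    fin_cases i
    · show Ideal.Quotient.mk (Itrans k) (σmap k (X 0)) = Ideal.Quotient.mk (Itrans k) (X 0)
      rw [show σmap k (X 0) = X 3 by simp [σmap], Ideal.Quotient.eq,
        show (X 3 - X 0 : A4 k) = -(X 0 - X 3) by ring, Itrans]
      exact neg_mem (Ideal.subset_span (by simp))
    · show Ideal.Quotient.mk (Itrans k) (σmap k (X 1)) = Ideal.Quotient.mk (Itrans k) (X 1)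
      rw [show σmap k (X 1) = X 2 by simp [σmap], Ideal.Quotient.eq,
        show (X 2 - X 1 : A4 k) = -(X 1 - X 2) by ring, Itrans]
      exact neg_mem (Ideal.subset_span (by simp))
    · show Ideal.Quotient.mk (Itrans k) (σmap k (X 2)) = Ideal.Quotient.mk (Itrans k) (X 2)
      rw [show σmap k (X 2) = X 2 by simp [σmap]]
    · show Ideal.Quotient.mk (Itrans k) (σmap k (X 3)) = Ideal.Quotient.mk (Itrans k) (X 3)
      rw [show σmap k (X 3) = X 3 by simp [σmap]]
  exact AlgHom.congr_fun h f

lemma mem_Itrans_iff (k : Type) [Field k] (f : A4 k) : f ∈ Itrans k ↔ σmap k f = 0 := by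
  refine ⟨σmap_of_mem k, fun h => ?_⟩
  have := mk_σmap k f
  rw [h, map_zero] at this
  exact (Ideal.Quotient.eq_zero_iff_mem).1 this.symm

lemma e_mem_Iunion (k : Type) [Field k] :
    (X 0 - X 2) + (X 1 - X 3) ∈ Iunion k := by
  constructor
  · exact add_mem (Ideal.subset_span (by simp)) (Ideal.subset_span (by simp))
  · rw [show (X 0 - X 2) + (X 1 - X 3) = (X 0 - X 3) + ((X 1 - X 2) : A4 k) by ring]
    exact add_mem (Ideal.subset_span (by simp)) (Ideal.subset_span (by simp))

lemma c_mem_Idiag (k : Type) [Field k] : (X 0 - X 2 : A4 k) ∈ Idiag k :=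
  Ideal.subset_span (by simp)

lemma X32_ne (k : Type) [Field k] : (X 3 - X 2 : A4 k) ≠ 0 :=
  sub_ne_zero.2 (fun h => by simpa using MvPolynomial.X_injective h)

/-- the map `A/I_T → A/I_S`, `[a] ↦ [(u₁ − v₁)·a]`, is a well-defined injective
`A`-module map, and the sequence `0 → A/I_T → A/I_S → A/I_Δ → 0`, with second map the
natural quotient, is exact. -/
theorem stmt_4 (k : Type) [Field k] :
    ∃ (φ : (A4 k ⧸ Itrans k) →ₗ[A4 k] A4 k ⧸ Iunion k)
      (ψ : (A4 k ⧸ Iunion k) →ₗ[A4 k] A4 k ⧸ Idiag k),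
      (∀ a : A4 k, φ (Ideal.Quotient.mk (Itrans k) a)
          = Ideal.Quotient.mk (Iunion k) ((X 0 - X 2) * a)) ∧
      (∀ a : A4 k, ψ (Ideal.Quotient.mk (Iunion k) a) = Ideal.Quotient.mk (Idiag k) a) ∧
      Function.Injective φ ∧ Function.Exact φ ψ ∧ Function.Surjective ψ := by
  classical
  -- the linear map `a ↦ [(u₁ - v₁)·a]` on `A`
  set c : A4 k := X 0 - X 2 with hc
  let f0 : A4 k →ₗ[A4 k] A4 k ⧸ Iunion k :=
    (Submodule.mkQ (Iunion k)).comp (LinearMap.mulLeft (A4 k) c)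
  have f0_apply : ∀ a : A4 k, f0 a = Ideal.Quotient.mk (Iunion k) (c * a) := fun a => rfl
  have hker : Itrans k ≤ LinearMap.ker f0 := by
    intro a ha
    rw [LinearMap.mem_ker, f0_apply, Ideal.Quotient.eq_zero_iff_mem]
    exact ⟨Ideal.mul_mem_right a _ (c_mem_Idiag k), Ideal.mul_mem_left _ c ha⟩
  refine ⟨Submodule.liftQ (Itrans k) f0 hker,
    Submodule.liftQ (Iunion k) (Submodule.mkQ (Idiag k))
      (by rw [Submodule.ker_mkQ]; exact inf_le_left), ?_, ?_, ?_, ?_, ?_⟩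
  · intro a
    exact (Submodule.liftQ_apply (Itrans k) f0 a).trans (f0_apply a)
  · intro a
    exact Submodule.liftQ_apply (Iunion k) (Submodule.mkQ (Idiag k)) a
  · -- injectivity
    rw [← LinearMap.ker_eq_bot, eq_bot_iff]
    intro x hx
    obtain ⟨a, rfl⟩ := Submodule.Quotient.mk_surjective _ x
    rw [LinearMap.mem_ker, Submodule.liftQ_apply, f0_apply,
      Ideal.Quotient.eq_zero_iff_mem] at hx
    have hT : c * a ∈ Itrans k := hx.2
    have hσ : σmap k (c * a) = 0 := σmap_of_mem k hT
    rw [map_mul] at hσ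
    have hσc : σmap k c = X 3 - X 2 := by simp [σmap, hc]
    rw [hσc] at hσ
    have ha : σmap k a = 0 := by
      rcases mul_eq_zero.1 hσ with h | h
      · exact absurd h (X32_ne k)
      · exact h
    have : a ∈ Itrans k := (mem_Itrans_iff k a).2 ha
    exact (Submodule.mem_bot _).2 ((Submodule.Quotient.mk_eq_zero _).2 this)
  · -- exactness at the middle
    intro y
    obtain ⟨a, rfl⟩ := Submodule.Quotient.mk_surjective _ y
    rw [Submodule.liftQ_apply, Submodule.mkQ_apply, Submodule.Quotient.mk_eq_zero]
    constructor
    · intro haΔ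
      rw [Idiag] at haΔ
      obtain ⟨p, q, hpq⟩ := Ideal.mem_span_pair.1 haΔ
      refine ⟨Submodule.Quotient.mk (p - q), ?_⟩
      rw [Submodule.liftQ_apply, f0_apply]
      rw [show Ideal.Quotient.mk (Iunion k) (c * (p - q))
          = Submodule.Quotient.mk (c * (p - q)) from rfl,
        show (Submodule.Quotient.mk a : A4 k ⧸ Iunion k)
          = Ideal.Quotient.mk (Iunion k) a from rfl]
      symm
      rw [show Submodule.Quotient.mk (c * (p - q))
          = Ideal.Quotient.mk (Iunion k) (c * (p - q)) from rfl, Ideal.Quotient.eq]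
      have : a - c * (p - q) = q * ((X 0 - X 2) + (X 1 - X 3)) := by
        rw [← hpq, hc]; ring
      rw [this]
      exact Ideal.mul_mem_left _ q (e_mem_Iunion k)
    · rintro ⟨x, hx⟩
      obtain ⟨b, rfl⟩ := Submodule.Quotient.mk_surjective _ x
      rw [Submodule.liftQ_apply, f0_apply] at hx
      have : c * b - a ∈ Iunion k := by
        rw [← Ideal.Quotient.eq]
        exact hx
      have h1 : c * b - a ∈ Idiag k := this.1
      have h2 : c * b ∈ Idiag k := Ideal.mul_mem_right b _ (c_mem_Idiag k)
      have := sub_mem h2 h1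
      simpa using this
  · -- surjectivity
    intro y
    obtain ⟨a, rfl⟩ := Submodule.Quotient.mk_surjective _ y
    exact ⟨Submodule.Quotient.mk a, Submodule.liftQ_apply _ _ a⟩

end StatementFour
end

section
/- Let k be a field, R = k[x,y], E = R^{S_2} the subalgebra of symmetric polynomials, and B = R ⊗_E R. Let f, g : B → B be multiplication by the elements x⊗1 − 1⊗x and x⊗1 − 1⊗y of B respectively, and let m : B → R be the multiplication map p ⊗ q ↦ pq. Then m ∘ f = 0, f ∘ g = 0, g ∘ f = 0, m is surjective, and moreover ker m = im f, ker f = im g, and ker g = im f; consequently the left-infinite 2-periodic complex ··· →^g B →^f B →^g B →^f B →^m R → 0 is exact. -/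
set_option synthInstance.maxHeartbeats 1000000
set_option maxHeartbeats 1000000

open MvPolynomial TensorProduct

noncomputable section StatementTwelve

variable (k : Type) [Field k]

/-- `R = k[x,y]`. -/
abbrev Rxy (k : Type) [Field k] : Type := MvPolynomial (Fin 2) k

/-- `E = R^{S₂}`, the subalgebra of symmetric polynomials. -/
abbrev Esym (k : Type) [Field k] : Subalgebra k (Rxy k) := symmetricSubalgebra (Fin 2) k

/-- `B = R ⊗_E R`. -/
abbrev Bbim (k : Type) [Field k] : Type := TensorProduct (Esym k) (Rxy k) (Rxy k)

/-- `f : B → B`, multiplication by `x⊗1 − 1⊗x`. -/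
def fmap (k : Type) [Field k] : Bbim k → Bbim k :=
  fun p => ((X 0 : Rxy k) ⊗ₜ[Esym k] (1 : Rxy k) - (1 : Rxy k) ⊗ₜ[Esym k] (X 0 : Rxy k)) * p

/-- `g : B → B`, multiplication by `x⊗1 − 1⊗y`. -/
def gmap (k : Type) [Field k] : Bbim k → Bbim k :=
  fun p => ((X 0 : Rxy k) ⊗ₜ[Esym k] (1 : Rxy k) - (1 : Rxy k) ⊗ₜ[Esym k] (X 1 : Rxy k)) * p

/-- `m : B → R`, the multiplication map `p ⊗ q ↦ pq`. -/
def mmap (k : Type) [Field k] : Bbim k → Rxy k :=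
  fun p => Algebra.TensorProduct.lmul' (Esym k) (S := Rxy k) p

lemma symm_e1 : ((X 0 + X 1 : Rxy k)).IsSymmetric := by
  intro e
  have h0 : e 0 = 0 ∨ e 0 = 1 := by omega
  have h1 : e 1 = 0 ∨ e 1 = 1 := by omega
  have hne : e 0 ≠ e 1 := fun h => by simpa using e.injective h
  rcases h0 with h0 | h0 <;> rcases h1 with h1 | h1 <;>
    simp [map_add, rename_X, h0, h1] at hne ⊢ <;> ring

lemma symm_e2 : ((X 0 * X 1 : Rxy k)).IsSymmetric := by
  intro e
  have h0 : e 0 = 0 ∨ e 0 = 1 := by omega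
  have h1 : e 1 = 0 ∨ e 1 = 1 := by omega
  have hne : e 0 ≠ e 1 := fun h => by simpa using e.injective h
  rcases h0 with h0 | h0 <;> rcases h1 with h1 | h1 <;>
    simp [map_mul, rename_X, h0, h1] at hne ⊢ <;> ring

/-- move a symmetric element across the tensor -/
lemma tmul_symm (s : Rxy k) (hs : s.IsSymmetric) (p q : Rxy k) :
    p ⊗ₜ[Esym k] (s * q) = (s * p) ⊗ₜ[Esym k] q := by
  have : (⟨s, (mem_symmetricSubalgebra s).2 hs⟩ : Esym k) • q = s * q := by
    rw [Algebra.smul_def]; rfl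
  rw [← this, ← TensorProduct.smul_tmul, Algebra.smul_def]
  rfl


lemma spanE : ∀ p : Rxy k, p ∈ Submodule.span (Esym k) ({1, X 0} : Set (Rxy k)) := by
  intro p
  set M := Submodule.span (Esym k) ({1, X 0} : Set (Rxy k)) with hM
  have h1 : (1 : Rxy k) ∈ M := Submodule.subset_span (by simp)
  have hx : (X 0 : Rxy k) ∈ M := Submodule.subset_span (by simp)
  have hsmul : ∀ (s : Rxy k), s.IsSymmetric → ∀ q ∈ M, s * q ∈ M := by
    intro s hs q hq
    have : s * q = (⟨s, (mem_symmetricSubalgebra s).2 hs⟩ : Esym k) • q := by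
      rw [Algebra.smul_def]; rfl
    rw [this]; exact M.smul_mem _ hq
  have hmul0 : ∀ q ∈ M, (X 0 : Rxy k) * q ∈ M := by
    intro q hq
    induction hq using Submodule.span_induction with
    | mem z hz =>
      rcases hz with rfl | rfl
      · simpa using hx
      · have : (X 0 : Rxy k) * X 0 = (X 0 + X 1) * X 0 - (X 0 * X 1) * 1 := by ring
        rw [this]
        exact M.sub_mem (hsmul _ (symm_e1 k) _ hx) (hsmul _ (symm_e2 k) _ h1)
    | zero => simpa using M.zero_mem
    | add a b _ _ ha hb => rw [mul_add]; exact M.add_mem ha hb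
    | smul s a _ ha => rw [mul_smul_comm]; exact M.smul_mem _ ha
  have hmul1 : ∀ q ∈ M, (X 1 : Rxy k) * q ∈ M := by
    intro q hq
    have : (X 1 : Rxy k) * q = (X 0 + X 1) * q - X 0 * q := by ring
    rw [this]
    exact M.sub_mem (hsmul _ (symm_e1 k) _ hq) (hmul0 q hq)
  induction p using MvPolynomial.induction_on with
  | C a =>
    have ha : (C a : Rxy k).IsSymmetric := IsSymmetric.C a
    simpa [mul_one] using hsmul _ ha 1 h1
  | add p q hp hq => exact M.add_mem hp hq
  | mul_X p i hp =>
    have : i = 0 ∨ i = 1 := by omega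
    rcases this with rfl | rfl
    · rw [mul_comm]; exact hmul0 p hp
    · rw [mul_comm]; exact hmul1 p hp

lemma pi_surj : ∀ b : Bbim k, ∃ a c : Rxy k,
    b = a ⊗ₜ[Esym k] 1 + c ⊗ₜ[Esym k] (X 0) := by
  intro b
  induction b using TensorProduct.induction_on with
  | zero => exact ⟨0, 0, by simp⟩
  | tmul p q =>
    have hq := spanE k q
    induction hq using Submodule.span_induction generalizing p with
    | mem z hz =>
      rcases hz with rfl | rfl
      · exact ⟨p, 0, by simp⟩
      · exact ⟨0, p, by simp⟩
    | zero => exact ⟨0, 0, by simp⟩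
    | add u v hu hv ihu ihv =>
      obtain ⟨a1, c1, h1⟩ := ihu p
      obtain ⟨a2, c2, h2⟩ := ihv p
      exact ⟨a1 + a2, c1 + c2, by
        rw [TensorProduct.tmul_add, h1, h2, TensorProduct.add_tmul,
          TensorProduct.add_tmul]; ring⟩
    | smul s u hu ihu =>
      obtain ⟨a, c, h⟩ := ihu (s • p)
      refine ⟨a, c, ?_⟩
      rw [← TensorProduct.smul_tmul, h]
  | add u v ihu ihv =>
    obtain ⟨a1, c1, h1⟩ := ihu
    obtain ⟨a2, c2, h2⟩ := ihv
    exact ⟨a1 + a2, c1 + c2, by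
      rw [h1, h2, TensorProduct.add_tmul, TensorProduct.add_tmul]; ring⟩


lemma as_smul (r w : Rxy k) :
    r ⊗ₜ[Esym k] w = r • ((1 : Rxy k) ⊗ₜ[Esym k] w) := by
  rw [TensorProduct.smul_tmul']
  simp

lemma tmul_reduce (c : Rxy k) : c ⊗ₜ[Esym k] (X 0 * X 0 : Rxy k) =
    ((X 0 + X 1) * c) ⊗ₜ[Esym k] (X 0 : Rxy k)
      - (X 0 * X 1 * c) ⊗ₜ[Esym k] (1 : Rxy k) := by
  have h : (X 0 * X 0 : Rxy k) = (X 0 + X 1) * X 0 - (X 0 * X 1) * 1 := by ring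
  rw [h, TensorProduct.tmul_sub, tmul_symm k _ (symm_e1 k), tmul_symm k _ (symm_e2 k)]

lemma c_tmul_X1 (c : Rxy k) : c ⊗ₜ[Esym k] (X 1 : Rxy k) =
    ((X 0 + X 1) * c) ⊗ₜ[Esym k] (1 : Rxy k) - c ⊗ₜ[Esym k] (X 0 : Rxy k) := by
  have h : (X 1 : Rxy k) = (X 0 + X 1) * 1 - X 0 := by ring
  conv_lhs => rw [h]
  rw [TensorProduct.tmul_sub, tmul_symm k _ (symm_e1 k)]


/-- abbreviations for the two multipliers -/
def uB : Bbim k := (X 0 : Rxy k) ⊗ₜ[Esym k] (1 : Rxy k) - (1 : Rxy k) ⊗ₜ[Esym k] (X 0 : Rxy k)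
def vB : Bbim k := (X 0 : Rxy k) ⊗ₜ[Esym k] (1 : Rxy k) - (1 : Rxy k) ⊗ₜ[Esym k] (X 1 : Rxy k)

lemma mul_u (a c : Rxy k) :
    uB k * (a ⊗ₜ[Esym k] (1 : Rxy k) + c ⊗ₜ[Esym k] (X 0 : Rxy k))
      = (X 0 * a + X 0 * X 1 * c) ⊗ₜ[Esym k] (1 : Rxy k)
        - (a + X 1 * c) ⊗ₜ[Esym k] (X 0 : Rxy k) := by
  rw [uB, sub_mul (α := Bbim k), mul_add, mul_add, Algebra.TensorProduct.tmul_mul_tmul,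
    Algebra.TensorProduct.tmul_mul_tmul, Algebra.TensorProduct.tmul_mul_tmul,
    Algebra.TensorProduct.tmul_mul_tmul]
  simp only [one_mul, mul_one]
  rw [tmul_reduce]
  rw [as_smul k (X 0 * a), as_smul k (X 0 * c), as_smul k a, as_smul k ((X 0 + X 1) * c),
    as_smul k (X 0 * X 1 * c), as_smul k (X 0 * a + X 0 * X 1 * c), as_smul k (a + X 1 * c)]
  module

lemma mul_v (a c : Rxy k) :
    vB k * (a ⊗ₜ[Esym k] (1 : Rxy k) + c ⊗ₜ[Esym k] (X 0 : Rxy k))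
      = (0 - (X 1 * a + X 0 * X 1 * c)) ⊗ₜ[Esym k] (1 : Rxy k)
        + (a + X 0 * c) ⊗ₜ[Esym k] (X 0 : Rxy k) := by
  rw [vB, sub_mul (α := Bbim k), mul_add, mul_add, Algebra.TensorProduct.tmul_mul_tmul,
    Algebra.TensorProduct.tmul_mul_tmul, Algebra.TensorProduct.tmul_mul_tmul,
    Algebra.TensorProduct.tmul_mul_tmul]
  simp only [one_mul, mul_one]
  rw [c_tmul_X1 k a, show (X 1 * X 0 : Rxy k) = X 0 * X 1 * 1 by ring,
    tmul_symm k _ (symm_e2 k)]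
  rw [as_smul k (X 0 * a), as_smul k (X 0 * c), as_smul k ((X 0 + X 1) * a),
    as_smul k a, as_smul k (X 0 * X 1 * c),
    as_smul k (0 - (X 1 * a + X 0 * X 1 * c)), as_smul k (a + X 0 * c)]
  module


/-- the swap `x ↔ y` as an `E`-algebra homomorphism -/
def sigmaHom : Rxy k →ₐ[Esym k] Rxy k where
  toRingHom := (rename (R := k) (Equiv.swap (0 : Fin 2) 1)).toRingHom
  commutes' := fun s => (mem_symmetricSubalgebra _).1 s.2 (Equiv.swap 0 1)

def m2 : Bbim k →ₐ[Esym k] Rxy k :=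
  Algebra.TensorProduct.productMap (AlgHom.id _ _) (sigmaHom k)

lemma m2_tmul (p q : Rxy k) :
    m2 k (p ⊗ₜ[Esym k] q) = p * rename (Equiv.swap (0 : Fin 2) 1) q := rfl

lemma mmap_tmul (p q : Rxy k) : mmap k (p ⊗ₜ[Esym k] q) = p * q :=
  Algebra.TensorProduct.lmul'_apply_tmul p q

lemma mmap_add (b b' : Bbim k) : mmap k (b + b') = mmap k b + mmap k b' := map_add (Algebra.TensorProduct.lmul' (Esym k) (S := Rxy k)) b b'

lemma mmap_mul (b b' : Bbim k) : mmap k (b * b') = mmap k b * mmap k b' := map_mul (Algebra.TensorProduct.lmul' (Esym k) (S := Rxy k)) b b'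

lemma coords (a c : Rxy k)
    (h : a ⊗ₜ[Esym k] (1 : Rxy k) + c ⊗ₜ[Esym k] (X 0 : Rxy k) = 0) :
    a = 0 ∧ c = 0 := by
  have h1 : a + c * X 0 = 0 := by
    have := congrArg (mmap k) h
    simpa [mmap, map_add, Algebra.TensorProduct.lmul'_apply_tmul] using this
  have h2 : a + c * X 1 = 0 := by
    have := congrArg (m2 k) h
    simpa [map_add, m2_tmul, rename_X, Equiv.swap_apply_left] using this
  have hc : c * (X 0 - X 1) = 0 := by linear_combination h1 - h2
  have hne : (X 0 - X 1 : Rxy k) ≠ 0 :=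
    sub_ne_zero_of_ne (fun hh => by simpa using X_injective hh)
  have hc0 : c = 0 := by
    rcases mul_eq_zero.1 hc with hc0 | hc0
    · exact hc0
    · exact absurd hc0 hne
  refine ⟨?_, hc0⟩
  simpa [hc0] using h1

lemma vB_coords : vB k =
    (-(X 1) : Rxy k) ⊗ₜ[Esym k] (1 : Rxy k) + (1 : Rxy k) ⊗ₜ[Esym k] (X 0 : Rxy k) := by
  rw [vB, c_tmul_X1 k 1]
  rw [as_smul k (X 0), as_smul k ((X 0 + X 1) * 1), as_smul k (-(X 1))]
  module

lemma uv_zero : uB k * vB k = 0 := by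
  rw [vB_coords, mul_u]
  rw [show (X 0 * -X 1 + X 0 * X 1 * 1 : Rxy k) = 0 by ring,
      show (-X 1 + X 1 * 1 : Rxy k) = 0 by ring]
  simp

lemma fmap_c (c : Rxy k) : fmap k ((-c) ⊗ₜ[Esym k] (1 : Rxy k)) =
    (-(c * X 0)) ⊗ₜ[Esym k] (1 : Rxy k) + c ⊗ₜ[Esym k] (X 0 : Rxy k) := by
  show uB k * _ = _
  have h0 : ((-c) ⊗ₜ[Esym k] (1 : Rxy k)) =
      (-c) ⊗ₜ[Esym k] (1 : Rxy k) + (0 : Rxy k) ⊗ₜ[Esym k] (X 0 : Rxy k) := by simp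
  rw [h0, mul_u]
  rw [as_smul k (X 0 * -c + X 0 * X 1 * 0), as_smul k (-c + X 1 * 0),
    as_smul k (-(c * X 0)), as_smul k c]
  module

lemma gmap_c (c : Rxy k) : gmap k (c ⊗ₜ[Esym k] (1 : Rxy k)) =
    (-(c * X 1)) ⊗ₜ[Esym k] (1 : Rxy k) + c ⊗ₜ[Esym k] (X 0 : Rxy k) := by
  show vB k * _ = _
  have h0 : (c ⊗ₜ[Esym k] (1 : Rxy k)) =
      c ⊗ₜ[Esym k] (1 : Rxy k) + (0 : Rxy k) ⊗ₜ[Esym k] (X 0 : Rxy k) := by simp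
  rw [h0, mul_v]
  rw [as_smul k (0 - (X 1 * c + X 0 * X 1 * 0)), as_smul k (c + X 0 * 0),
    as_smul k (-(c * X 1)), as_smul k c]
  module

lemma mf_zero (p : Bbim k) : mmap k (fmap k p) = 0 := by
  have hu : mmap k (uB k) = 0 := by
    simp [mmap, uB, map_sub, Algebra.TensorProduct.lmul'_apply_tmul]
  have := mmap_mul k (uB k) p
  rw [hu, zero_mul] at this
  exact this

lemma fg_zero (p : Bbim k) : fmap k (gmap k p) = 0 := by
  show uB k * (vB k * p) = 0
  rw [← mul_assoc, uv_zero, zero_mul]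

lemma gf_zero (p : Bbim k) : gmap k (fmap k p) = 0 := by
  show vB k * (uB k * p) = 0
  rw [← mul_assoc, mul_comm (vB k) (uB k), uv_zero, zero_mul]


/-- `m ∘ f = 0`, `f ∘ g = 0`, `g ∘ f = 0`, `m` is surjective, and
`ker m = im f`, `ker f = im g`, `ker g = im f`; consequently the left-infinite 2-periodic
complex `··· → B → B → B → B → R → 0` with alternating differentials `f`, `g` and
augmentation `m` is exact. -/
theorem stmt_12 :
    (∀ p : Bbim k, mmap k (fmap k p) = 0) ∧
    (∀ p : Bbim k, fmap k (gmap k p) = 0) ∧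
    (∀ p : Bbim k, gmap k (fmap k p) = 0) ∧
    Function.Surjective (mmap k) ∧
    Function.Exact (fmap k) (mmap k) ∧
    Function.Exact (gmap k) (fmap k) ∧
    Function.Exact (fmap k) (gmap k) := by
  refine ⟨mf_zero k, fg_zero k, gf_zero k, ?_, ?_, ?_, ?_⟩
  · -- surjectivity of m
    intro r
    exact ⟨r ⊗ₜ[Esym k] (1 : Rxy k), by rw [mmap_tmul, mul_one]⟩
  · -- Exact f m
    intro p
    constructor
    · intro hp
      obtain ⟨a, c, rfl⟩ := pi_surj k p
      rw [mmap_add, mmap_tmul, mmap_tmul, mul_one] at hp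
      have ha : a = -(c * X 0) := by linear_combination hp
      refine ⟨(-c) ⊗ₜ[Esym k] (1 : Rxy k), ?_⟩
      rw [fmap_c, ha]
    · rintro ⟨q, rfl⟩
      exact mf_zero k q
  · -- Exact g f
    intro p
    constructor
    · intro hp
      obtain ⟨a, c, rfl⟩ := pi_surj k p
      have hp' : fmap k (a ⊗ₜ[Esym k] (1 : Rxy k) + c ⊗ₜ[Esym k] (X 0 : Rxy k)) =
          (X 0 * a + X 0 * X 1 * c) ⊗ₜ[Esym k] (1 : Rxy k)
            + (-(a + X 1 * c)) ⊗ₜ[Esym k] (X 0 : Rxy k) := by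
        rw [show fmap k (a ⊗ₜ[Esym k] (1 : Rxy k) + c ⊗ₜ[Esym k] (X 0 : Rxy k))
            = uB k * (a ⊗ₜ[Esym k] (1 : Rxy k) + c ⊗ₜ[Esym k] (X 0 : Rxy k)) from rfl,
          mul_u, TensorProduct.neg_tmul, ← sub_eq_add_neg]
      rw [hp] at hp'
      obtain ⟨-, h2⟩ := coords k _ _ hp'.symm
      have ha : a = -(c * X 1) := by
        have := neg_eq_zero.1 h2
        linear_combination this
      refine ⟨c ⊗ₜ[Esym k] (1 : Rxy k), ?_⟩
      rw [gmap_c, ha]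
    · rintro ⟨q, rfl⟩
      exact fg_zero k q
  · -- Exact f g
    intro p
    constructor
    · intro hp
      obtain ⟨a, c, rfl⟩ := pi_surj k p
      have hp' : gmap k (a ⊗ₜ[Esym k] (1 : Rxy k) + c ⊗ₜ[Esym k] (X 0 : Rxy k)) =
          (0 - (X 1 * a + X 0 * X 1 * c)) ⊗ₜ[Esym k] (1 : Rxy k)
            + (a + X 0 * c) ⊗ₜ[Esym k] (X 0 : Rxy k) := mul_v k a c
      rw [hp] at hp'
      obtain ⟨-, h2⟩ := coords k _ _ hp'.symm
      have ha : a = -(c * X 0) := by linear_combination h2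
      refine ⟨(-c) ⊗ₜ[Esym k] (1 : Rxy k), ?_⟩
      rw [fmap_c, ha]
    · rintro ⟨q, rfl⟩
      exact gf_zero k q

end StatementTwelve
end

section
/- Let k be a field and A_1, A_2, A_3, B_1, B_2, B_3 commutative k-algebras. Let P be a module over A_1 ⊗_k A_2, Q a module over A_2 ⊗_k A_3, P' a module over B_1 ⊗_k B_2, and Q' a module over B_2 ⊗_k B_3. Then there is a natural isomorphism (P ⊗_k P') ⊗_{A_2 ⊗_k B_2} (Q ⊗_k Q') ≅ (P ⊗_{A_2} Q) ⊗_k (P' ⊗_{B_2} Q') of modules over A_1 ⊗_k B_1 ⊗_k A_3 ⊗_k B_3. -/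
/-!
Both sides are quotients of `P ⊗ P' ⊗ Q ⊗ Q'` (over `k`): on the left one makes the middle
factors balanced over `A₂ ⊗ B₂`, on the right over `A₂` and over `B₂` separately. These are the
same relations, because `A₂ ⊗ B₂` is spanned by the products `(a₂ ⊗ 1) * (1 ⊗ b₂)` and the
actions are factorwise. Hence `(p ⊗ p') ⊗ (q ⊗ q') ↦ (p ⊗ q) ⊗ (p' ⊗ q')` and its inverse are
well defined, and they commute with the outer actions, which are factorwise on pure tensors.
The given `k`-structures on `P ⊗_{A₂} Q` and `P' ⊗_{B₂} Q'` are the canonical ones, since they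
agree with them on pure tensors.
-/

namespace TensorProduct

section NestedTensor

variable {R₁ R₂ T M M' N N' : Type*} [CommSemiring R₁] [CommSemiring R₂] [CommSemiring T]
  [AddCommMonoid M] [AddCommMonoid M'] [AddCommMonoid N] [AddCommMonoid N']
  [Module R₁ M] [Module R₁ M'] [Module R₂ N] [Module R₂ N']
  [Module T (M ⊗[R₁] M')] [Module T (N ⊗[R₂] N')]

@[elab_as_elim]
theorem induction_on_tmul_tmul {motive : (M ⊗[R₁] M') ⊗[T] (N ⊗[R₂] N') → Prop}
    (z : (M ⊗[R₁] M') ⊗[T] (N ⊗[R₂] N')) (zero : motive 0)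
    (tmul : ∀ m m' n n', motive ((m ⊗ₜ m') ⊗ₜ (n ⊗ₜ n')))
    (add : ∀ x y, motive x → motive y → motive (x + y)) : motive z := by
  induction z using TensorProduct.induction_on with
  | zero => exact zero
  | add x y hx hy => exact add x y hx hy
  | tmul x y =>
    induction x using TensorProduct.induction_on with
    | zero => simpa only [zero_tmul] using zero
    | add x₁ x₂ h₁ h₂ => simpa only [add_tmul] using add _ _ h₁ h₂
    | tmul m m' =>
      induction y using TensorProduct.induction_on with
      | zero => simpa only [tmul_zero] using zero
      | add y₁ y₂ h₁ h₂ => simpa only [tmul_add] using add _ _ h₁ h₂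
      | tmul n n' => exact tmul m m' n n'

theorem addMonoidHom_ext_tmul_tmul {Z : Type*} [AddCommMonoid Z]
    {f g : (M ⊗[R₁] M') ⊗[T] (N ⊗[R₂] N') →+ Z}
    (h : ∀ m m' n n', f ((m ⊗ₜ m') ⊗ₜ (n ⊗ₜ n')) = g ((m ⊗ₜ m') ⊗ₜ (n ⊗ₜ n'))) : f = g :=
  AddMonoidHom.ext fun z => induction_on_tmul_tmul z (by simp only [map_zero]) h
    fun x y hx hy => by simp only [map_add, hx, hy]

theorem map_smul_of_tmul_tmul {k C₁ C₂ C₃ C₄ Y : Type*} [CommSemiring k]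
    [Semiring C₁] [Semiring C₂] [Semiring C₃] [Semiring C₄]
    [Algebra k C₁] [Algebra k C₂] [Algebra k C₃] [Algebra k C₄] [AddCommMonoid Y]
    [Module ((C₁ ⊗[k] C₂) ⊗[k] (C₃ ⊗[k] C₄)) ((M ⊗[R₁] M') ⊗[T] (N ⊗[R₂] N'))]
    [Module ((C₁ ⊗[k] C₂) ⊗[k] (C₃ ⊗[k] C₄)) Y] (f : (M ⊗[R₁] M') ⊗[T] (N ⊗[R₂] N') →+ Y)
    (h : ∀ (c₁ : C₁) (c₂ : C₂) (c₃ : C₃) (c₄ : C₄) (m : M) (m' : M') (n : N) (n' : N'),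
      f (((c₁ ⊗ₜ[k] c₂) ⊗ₜ[k] (c₃ ⊗ₜ[k] c₄)) • ((m ⊗ₜ[R₁] m') ⊗ₜ[T] (n ⊗ₜ[R₂] n'))) =
        ((c₁ ⊗ₜ[k] c₂) ⊗ₜ[k] (c₃ ⊗ₜ[k] c₄)) • f ((m ⊗ₜ[R₁] m') ⊗ₜ[T] (n ⊗ₜ[R₂] n')))
    (t : (C₁ ⊗[k] C₂) ⊗[k] (C₃ ⊗[k] C₄)) (z : (M ⊗[R₁] M') ⊗[T] (N ⊗[R₂] N')) :
    f (t • z) = t • f z := by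
  induction t using induction_on_tmul_tmul with
  | zero =>
    -- `rw`/`simp` cannot use `zero_smul` here: this `0` is the zero of the tensor product as an
    -- additive monoid, which is the ring's zero only up to unfolding instances
    exact (congrArg f (zero_smul ((C₁ ⊗[k] C₂) ⊗[k] (C₃ ⊗[k] C₄)) z)).trans
      ((map_zero f).trans (zero_smul ((C₁ ⊗[k] C₂) ⊗[k] (C₃ ⊗[k] C₄)) (f z)).symm)
  | add t₁ t₂ h₁ h₂ => rw [add_smul, add_smul, map_add, h₁, h₂]
  | tmul c₁ c₂ c₃ c₄ =>
    induction z using induction_on_tmul_tmul with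
    | zero => rw [smul_zero, map_zero, smul_zero]
    | add z₁ z₂ h₁ h₂ => rw [smul_add, map_add, map_add, smul_add, h₁, h₂]
    | tmul m m' n n' => exact h c₁ c₂ c₃ c₄ m m' n n'

end NestedTensor

section LiftBalanced

variable {R M N Z : Type*} [CommSemiring R] [AddCommMonoid M] [AddCommMonoid N] [AddCommGroup Z]
  [Module R M] [Module R N]

def liftBalanced (f : M → N → Z) (add_left : ∀ m₁ m₂ n, f (m₁ + m₂) n = f m₁ n + f m₂ n)
    (add_right : ∀ m n₁ n₂, f m (n₁ + n₂) = f m n₁ + f m n₂)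
    (smul_left : ∀ (r : R) m n, f (r • m) n = f m (r • n)) : M ⊗[R] N →+ Z :=
  liftAddHom (AddMonoidHom.mk' (fun m => AddMonoidHom.mk' (f m) (add_right m))
    fun m₁ m₂ => AddMonoidHom.ext (add_left m₁ m₂)) smul_left

@[simp]
theorem liftBalanced_tmul (f : M → N → Z) (add_left) (add_right) (smul_left) (m : M) (n : N) :
    liftBalanced (R := R) f add_left add_right smul_left (m ⊗ₜ n) = f m n :=
  rfl

theorem addMonoidHom_ext {f g : M ⊗[R] N →+ Z} (h : ∀ m n, f (m ⊗ₜ n) = g (m ⊗ₜ n)) : f = g :=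
  AddMonoidHom.ext fun z => z.induction_on (by simp only [map_zero]) h
    fun x y hx hy => by simp only [map_add, hx, hy]

end LiftBalanced

section TensorOverTensor

variable {k R S M N M' N' : Type*} [CommSemiring k] [CommSemiring R] [CommSemiring S]
  [Algebra k R] [Algebra k S]
  [AddCommGroup M] [AddCommGroup N] [AddCommGroup M'] [AddCommGroup N']
  [Module R M] [Module R N] [Module S M'] [Module S N']
  [Module k M] [Module k N] [Module k M'] [Module k N']
  [IsScalarTower k R M] [IsScalarTower k R N] [IsScalarTower k S M'] [IsScalarTower k S N']

variable (k R S M N M' N') in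
def tensorTensorTensorCommMapOfCompatibleSMul :
    (M ⊗[k] M') ⊗[k] (N ⊗[k] N') →ₗ[k] (M ⊗[R] N) ⊗[k] (M' ⊗[S] N') :=
  map (mapOfCompatibleSMul R k k M N) (mapOfCompatibleSMul S k k M' N') ∘ₗ
    TensorProduct.tensorTensorTensorComm k M M' N N'

theorem tensorTensorTensorCommMapOfCompatibleSMul_tmul (m : M) (m' : M') (n : N) (n' : N') :
    tensorTensorTensorCommMapOfCompatibleSMul k R S M N M' N' ((m ⊗ₜ m') ⊗ₜ (n ⊗ₜ n')) =
      (m ⊗ₜ n) ⊗ₜ (m' ⊗ₜ n') :=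
  rfl

variable [Module (R ⊗[k] S) (M ⊗[k] M')] [Module (R ⊗[k] S) (N ⊗[k] N')]

theorem tensorTensorTensorCommMapOfCompatibleSMul_smul_tmul
    (hM : ∀ (r : R) (s : S) (m : M) (m' : M'), (r ⊗ₜ[k] s) • (m ⊗ₜ[k] m') = (r • m) ⊗ₜ (s • m'))
    (hN : ∀ (r : R) (s : S) (n : N) (n' : N'), (r ⊗ₜ[k] s) • (n ⊗ₜ[k] n') = (r • n) ⊗ₜ (s • n'))
    (t : R ⊗[k] S) (x : M ⊗[k] M') (y : N ⊗[k] N') :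
    tensorTensorTensorCommMapOfCompatibleSMul k R S M N M' N' ((t • x) ⊗ₜ y) =
      tensorTensorTensorCommMapOfCompatibleSMul k R S M N M' N' (x ⊗ₜ (t • y)) := by
  induction t using TensorProduct.induction_on with
  | zero => simp only [zero_smul, zero_tmul, tmul_zero]
  | add t₁ t₂ h₁ h₂ => simp only [add_smul, add_tmul, tmul_add, map_add, h₁, h₂]
  | tmul r s =>
    induction x using TensorProduct.induction_on with
    | zero => simp only [smul_zero, zero_tmul, map_zero]
    | add x₁ x₂ h₁ h₂ => simp only [smul_add, add_tmul, map_add, h₁, h₂]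
    | tmul m m' =>
      induction y using TensorProduct.induction_on with
      | zero => simp only [smul_zero, tmul_zero, map_zero]
      | add y₁ y₂ h₁ h₂ => simp only [smul_add, tmul_add, map_add, h₁, h₂]
      | tmul n n' =>
        rw [hM, hN, tensorTensorTensorCommMapOfCompatibleSMul_tmul,
          tensorTensorTensorCommMapOfCompatibleSMul_tmul, smul_tmul, smul_tmul]

def tensorOverTensorToTensor
    (hM : ∀ (r : R) (s : S) (m : M) (m' : M'), (r ⊗ₜ[k] s) • (m ⊗ₜ[k] m') = (r • m) ⊗ₜ (s • m'))
    (hN : ∀ (r : R) (s : S) (n : N) (n' : N'), (r ⊗ₜ[k] s) • (n ⊗ₜ[k] n') = (r • n) ⊗ₜ (s • n')) :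
    (M ⊗[k] M') ⊗[R ⊗[k] S] (N ⊗[k] N') →+ (M ⊗[R] N) ⊗[k] (M' ⊗[S] N') :=
  liftBalanced (fun x y => tensorTensorTensorCommMapOfCompatibleSMul k R S M N M' N' (x ⊗ₜ y))
    (fun _ _ _ => by simp only [add_tmul, map_add]) (fun _ _ _ => by simp only [tmul_add, map_add])
    (tensorTensorTensorCommMapOfCompatibleSMul_smul_tmul hM hN)

def tensorToTensorOverTensor
    (hM : ∀ (r : R) (s : S) (m : M) (m' : M'), (r ⊗ₜ[k] s) • (m ⊗ₜ[k] m') = (r • m) ⊗ₜ (s • m'))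
    (hN : ∀ (r : R) (s : S) (n : N) (n' : N'), (r ⊗ₜ[k] s) • (n ⊗ₜ[k] n') = (r • n) ⊗ₜ (s • n')) :
    (M ⊗[R] N) ⊗[k] (M' ⊗[S] N') →+ (M ⊗[k] M') ⊗[R ⊗[k] S] (N ⊗[k] N') :=
  let ψ (m : M) (n : N) : M' ⊗[S] N' →+ (M ⊗[k] M') ⊗[R ⊗[k] S] (N ⊗[k] N') :=
    liftBalanced (fun m' n' => (m ⊗ₜ m') ⊗ₜ (n ⊗ₜ n'))
      (fun _ _ _ => by simp only [tmul_add, add_tmul])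
      (fun _ _ _ => by simp only [tmul_add])
      (fun s m' n' => by
        simpa only [hM, hN, one_smul] using
          smul_tmul ((1 : R) ⊗ₜ[k] s) (m ⊗ₜ[k] m') (n ⊗ₜ[k] n'))
  let φ : M ⊗[R] N →+ M' ⊗[S] N' →+ (M ⊗[k] M') ⊗[R ⊗[k] S] (N ⊗[k] N') :=
    liftBalanced ψ
      (fun _ _ _ => addMonoidHom_ext fun _ _ => by
        simp only [ψ, liftBalanced_tmul, AddMonoidHom.add_apply, add_tmul])
      (fun _ _ _ => addMonoidHom_ext fun _ _ => by
        simp only [ψ, liftBalanced_tmul, AddMonoidHom.add_apply, add_tmul, tmul_add])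
      (fun r m n => addMonoidHom_ext fun m' n' => by
        simpa only [ψ, liftBalanced_tmul, hM, hN, one_smul] using
          smul_tmul (r ⊗ₜ[k] (1 : S)) (m ⊗ₜ[k] m') (n ⊗ₜ[k] n'))
  liftBalanced (fun x y => φ x y) (fun _ _ _ => by simp only [map_add, AddMonoidHom.add_apply])
    (fun _ _ _ => by simp only [map_add])
    (fun c x y => by
      induction x using TensorProduct.induction_on with
      | zero => simp only [smul_zero, map_zero, AddMonoidHom.zero_apply]
      | add x₁ x₂ h₁ h₂ => simp only [smul_add, map_add, AddMonoidHom.add_apply, h₁, h₂]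
      | tmul m n =>
        induction y using TensorProduct.induction_on with
        | zero => simp only [smul_zero, map_zero]
        | add y₁ y₂ h₁ h₂ => simp only [smul_add, map_add, h₁, h₂]
        | tmul m' n' => simp only [smul_tmul', φ, ψ, liftBalanced_tmul, smul_tmul])

def tensorOverTensorEquiv
    (hM : ∀ (r : R) (s : S) (m : M) (m' : M'), (r ⊗ₜ[k] s) • (m ⊗ₜ[k] m') = (r • m) ⊗ₜ (s • m'))
    (hN : ∀ (r : R) (s : S) (n : N) (n' : N'), (r ⊗ₜ[k] s) • (n ⊗ₜ[k] n') = (r • n) ⊗ₜ (s • n')) :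
    (M ⊗[k] M') ⊗[R ⊗[k] S] (N ⊗[k] N') ≃+ (M ⊗[R] N) ⊗[k] (M' ⊗[S] N') :=
  (tensorOverTensorToTensor hM hN).toAddEquiv (tensorToTensorOverTensor hM hN)
    (addMonoidHom_ext_tmul_tmul fun _ _ _ _ => rfl) (addMonoidHom_ext_tmul_tmul fun _ _ _ _ => rfl)

@[simp]
theorem tensorOverTensorEquiv_tmul
    (hM : ∀ (r : R) (s : S) (m : M) (m' : M'), (r ⊗ₜ[k] s) • (m ⊗ₜ[k] m') = (r • m) ⊗ₜ (s • m'))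
    (hN : ∀ (r : R) (s : S) (n : N) (n' : N'), (r ⊗ₜ[k] s) • (n ⊗ₜ[k] n') = (r • n) ⊗ₜ (s • n'))
    (m : M) (m' : M') (n : N) (n' : N') :
    tensorOverTensorEquiv hM hN ((m ⊗ₜ m') ⊗ₜ (n ⊗ₜ n')) = (m ⊗ₜ n) ⊗ₜ (m' ⊗ₜ n') :=
  rfl

end TensorOverTensor

/-- The instance argument `[SMulCommClass R k M]` comes after `h`, so that the action in `h` is
the one of `inst` and not that of `leftModule`. -/
theorem module_eq_leftModule {R k M N : Type*} [CommSemiring R] [CommSemiring k]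
    [AddCommMonoid M] [AddCommMonoid N] [Module R M] [Module R N] [Module k M]
    (inst : Module k (M ⊗[R] N))
    (h : letI := inst; ∀ (c : k) (m : M) (n : N), c • (m ⊗ₜ[R] n) = (c • m) ⊗ₜ n)
    [SMulCommClass R k M] : inst = leftModule :=
  Module.ext' _ _ fun c z => by
    induction z using TensorProduct.induction_on with
    | zero => exact (inst.smul_zero c).trans (smul_zero c).symm
    | add x y hx hy => exact (inst.smul_add c x y).trans (by rw [hx, hy, smul_add])
    | tmul m n => exact h c m n

end TensorProduct

open TensorProduct

theorem AlgHom.isScalarTower_compHom {k A B M : Type*} [CommSemiring k] [Semiring A] [Semiring B]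
    [Algebra k A] [Algebra k B] [AddCommMonoid M] [Module B M] (f : A →ₐ[k] B) :
    letI := Module.compHom M f.toRingHom
    letI := Module.compHom M (algebraMap k B)
    IsScalarTower k A M :=
  letI := Module.compHom M f.toRingHom
  letI := Module.compHom M (algebraMap k B)
  IsScalarTower.of_algebraMap_smul fun c m => congrArg (· • m) (f.commutes c)

/-- Let `k` be a field and `A₁, A₂, A₃, B₁, B₂, B₃` commutative `k`-algebras.
Let `P` be a module over `A₁ ⊗_k A₂`, `Q` a module over `A₂ ⊗_k A₃`, `P'` a module over
`B₁ ⊗_k B₂`, and `Q'` a module over `B₂ ⊗_k B₃`.  Then there is a natural isomorphism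
`(P ⊗_k P') ⊗_{A₂ ⊗_k B₂} (Q ⊗_k Q') ≅ (P ⊗_{A₂} Q) ⊗_k (P' ⊗_{B₂} Q')` of modules over
`A₁ ⊗_k B₁ ⊗_k A₃ ⊗_k B₃`.

All the intermediate module structures are canonically determined; here they are
universally quantified together with the equations characterizing them on pure tensors
and pure scalars. -/
theorem stmt_13 (k : Type) [Field k]
    (A₁ A₂ A₃ B₁ B₂ B₃ : Type)
    [CommRing A₁] [Algebra k A₁] [CommRing A₂] [Algebra k A₂] [CommRing A₃] [Algebra k A₃]
    [CommRing B₁] [Algebra k B₁] [CommRing B₂] [Algebra k B₂] [CommRing B₃] [Algebra k B₃]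
    (P Q P' Q' : Type)
    [AddCommGroup P] [AddCommGroup Q] [AddCommGroup P'] [AddCommGroup Q']
    [Module (TensorProduct k A₁ A₂) P] [Module (TensorProduct k A₂ A₃) Q]
    [Module (TensorProduct k B₁ B₂) P'] [Module (TensorProduct k B₂ B₃) Q'] :
    -- the actions of the individual tensor factors on `P, Q, P', Q'`
    letI : Module A₂ P := Module.compHom P
      (Algebra.TensorProduct.includeRight : A₂ →ₐ[k] TensorProduct k A₁ A₂).toRingHom
    letI : Module A₂ Q := Module.compHom Q
      (Algebra.TensorProduct.includeLeft : A₂ →ₐ[k] TensorProduct k A₂ A₃).toRingHom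
    letI : Module B₂ P' := Module.compHom P'
      (Algebra.TensorProduct.includeRight : B₂ →ₐ[k] TensorProduct k B₁ B₂).toRingHom
    letI : Module B₂ Q' := Module.compHom Q'
      (Algebra.TensorProduct.includeLeft : B₂ →ₐ[k] TensorProduct k B₂ B₃).toRingHom
    letI : Module A₁ P := Module.compHom P
      (Algebra.TensorProduct.includeLeft : A₁ →ₐ[k] TensorProduct k A₁ A₂).toRingHom
    letI : Module A₃ Q := Module.compHom Q
      (Algebra.TensorProduct.includeRight : A₃ →ₐ[k] TensorProduct k A₂ A₃).toRingHom
    letI : Module B₁ P' := Module.compHom P'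
      (Algebra.TensorProduct.includeLeft : B₁ →ₐ[k] TensorProduct k B₁ B₂).toRingHom
    letI : Module B₃ Q' := Module.compHom Q'
      (Algebra.TensorProduct.includeRight : B₃ →ₐ[k] TensorProduct k B₂ B₃).toRingHom
    letI : Module k P := Module.compHom P (algebraMap k (TensorProduct k A₁ A₂))
    letI : Module k Q := Module.compHom Q (algebraMap k (TensorProduct k A₂ A₃))
    letI : Module k P' := Module.compHom P' (algebraMap k (TensorProduct k B₁ B₂))
    letI : Module k Q' := Module.compHom Q' (algebraMap k (TensorProduct k B₂ B₃))
    -- the `A₂ ⊗ B₂`-module structure on `P ⊗_k P'`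
    ∀ (mPP' : Module (TensorProduct k A₂ B₂) (TensorProduct k P P')),
    letI := mPP'
    (∀ (a₂ : A₂) (b₂ : B₂) (p : P) (p' : P'),
        (a₂ ⊗ₜ[k] b₂) • (p ⊗ₜ[k] p') = (a₂ • p) ⊗ₜ[k] (b₂ • p')) →
    -- the `A₂ ⊗ B₂`-module structure on `Q ⊗_k Q'`
    ∀ (mQQ' : Module (TensorProduct k A₂ B₂) (TensorProduct k Q Q')),
    letI := mQQ'
    (∀ (a₂ : A₂) (b₂ : B₂) (q : Q) (q' : Q'),
        (a₂ ⊗ₜ[k] b₂) • (q ⊗ₜ[k] q') = (a₂ • q) ⊗ₜ[k] (b₂ • q')) →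
    -- the `k`-module structures on `P ⊗_{A₂} Q` and `P' ⊗_{B₂} Q'`
    ∀ (mkT : Module k (TensorProduct A₂ P Q)),
    letI := mkT
    (∀ (c : k) (p : P) (q : Q), c • (p ⊗ₜ[A₂] q) = (c • p) ⊗ₜ[A₂] q) →
    ∀ (mkT' : Module k (TensorProduct B₂ P' Q')),
    letI := mkT'
    (∀ (c : k) (p' : P') (q' : Q'), c • (p' ⊗ₜ[B₂] q') = (c • p') ⊗ₜ[B₂] q') →
    -- the `A₁ ⊗ B₁ ⊗ A₃ ⊗ B₃`-module structure on the left-hand side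
    ∀ (mL : Module (TensorProduct k (TensorProduct k A₁ B₁) (TensorProduct k A₃ B₃))
        (TensorProduct (TensorProduct k A₂ B₂) (TensorProduct k P P') (TensorProduct k Q Q'))),
    letI := mL
    (∀ (a₁ : A₁) (b₁ : B₁) (a₃ : A₃) (b₃ : B₃) (p : P) (p' : P') (q : Q) (q' : Q'),
        ((a₁ ⊗ₜ[k] b₁) ⊗ₜ[k] (a₃ ⊗ₜ[k] b₃))
            • ((p ⊗ₜ[k] p') ⊗ₜ[TensorProduct k A₂ B₂] (q ⊗ₜ[k] q'))
          = ((a₁ • p) ⊗ₜ[k] (b₁ • p'))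
              ⊗ₜ[TensorProduct k A₂ B₂] ((a₃ • q) ⊗ₜ[k] (b₃ • q'))) →
    -- the `A₁ ⊗ B₁ ⊗ A₃ ⊗ B₃`-module structure on the right-hand side
    ∀ (mR : Module (TensorProduct k (TensorProduct k A₁ B₁) (TensorProduct k A₃ B₃))
        (TensorProduct k (TensorProduct A₂ P Q) (TensorProduct B₂ P' Q'))),
    letI := mR
    (∀ (a₁ : A₁) (b₁ : B₁) (a₃ : A₃) (b₃ : B₃) (p : P) (q : Q) (p' : P') (q' : Q'),
        ((a₁ ⊗ₜ[k] b₁) ⊗ₜ[k] (a₃ ⊗ₜ[k] b₃)) • ((p ⊗ₜ[A₂] q) ⊗ₜ[k] (p' ⊗ₜ[B₂] q'))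
          = ((a₁ • p) ⊗ₜ[A₂] (a₃ • q)) ⊗ₜ[k] ((b₁ • p') ⊗ₜ[B₂] (b₃ • q'))) →
    -- the natural isomorphism `(P ⊗ P') ⋆ (Q ⊗ Q') ≅ (P ⋆ Q) ⊗ (P' ⋆ Q')`
    Nonempty
      ((TensorProduct (TensorProduct k A₂ B₂) (TensorProduct k P P') (TensorProduct k Q Q'))
        ≃ₗ[TensorProduct k (TensorProduct k A₁ B₁) (TensorProduct k A₃ B₃)]
        (TensorProduct k (TensorProduct A₂ P Q) (TensorProduct B₂ P' Q'))) := by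
  intro mPP' hPP' mQQ' hQQ' mkT hkT mkT' hkT' mL hL mR hR
  let : Module A₂ P := Module.compHom P
    (Algebra.TensorProduct.includeRight : A₂ →ₐ[k] TensorProduct k A₁ A₂).toRingHom
  let : Module A₂ Q := Module.compHom Q
    (Algebra.TensorProduct.includeLeft : A₂ →ₐ[k] TensorProduct k A₂ A₃).toRingHom
  let : Module B₂ P' := Module.compHom P'
    (Algebra.TensorProduct.includeRight : B₂ →ₐ[k] TensorProduct k B₁ B₂).toRingHom
  let : Module B₂ Q' := Module.compHom Q'
    (Algebra.TensorProduct.includeLeft : B₂ →ₐ[k] TensorProduct k B₂ B₃).toRingHom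
  let : Module k P := Module.compHom P (algebraMap k (TensorProduct k A₁ A₂))
  let : Module k Q := Module.compHom Q (algebraMap k (TensorProduct k A₂ A₃))
  let : Module k P' := Module.compHom P' (algebraMap k (TensorProduct k B₁ B₂))
  let : Module k Q' := Module.compHom Q' (algebraMap k (TensorProduct k B₂ B₃))
  have := AlgHom.isScalarTower_compHom (M := P)
    (Algebra.TensorProduct.includeRight : A₂ →ₐ[k] TensorProduct k A₁ A₂)
  have := AlgHom.isScalarTower_compHom (M := Q)
    (Algebra.TensorProduct.includeLeft : A₂ →ₐ[k] TensorProduct k A₂ A₃)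
  have := AlgHom.isScalarTower_compHom (M := P')
    (Algebra.TensorProduct.includeRight : B₂ →ₐ[k] TensorProduct k B₁ B₂)
  have := AlgHom.isScalarTower_compHom (M := Q')
    (Algebra.TensorProduct.includeLeft : B₂ →ₐ[k] TensorProduct k B₂ B₃)
  obtain rfl := module_eq_leftModule mkT hkT
  obtain rfl := module_eq_leftModule mkT' hkT'
  let e := tensorOverTensorEquiv hPP' hQQ'
  refine ⟨e.toLinearEquiv <| map_smul_of_tmul_tmul e.toAddMonoidHom fun _ _ _ _ _ _ _ _ => ?_⟩
  rw [hL, AddEquiv.coe_toAddMonoidHom, tensorOverTensorEquiv_tmul, tensorOverTensorEquiv_tmul, hR]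
end
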